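/- Second H-isomorphism theorem: if M and N are saturated sub-H-groups of an H-group P and N is normal in P, then the saturation of the product MN is a sub-H-group of P, and M/(M ∩ N) is isomorphic as a group to (saturation of MN)/N. -/

import Mathlib

open ContinuousMap

universe u v

/-- An H-group: a pointed space with continuous multiplication, homotopy inverse and the
constant map as homotopy identity, satisfying the H-group axioms up to pointed homotopy. -/
structure HGroup (P : Type u) [TopologicalSpace P] where
  pt : P
  mul : C(P × P, P)
  inv : C(P, P)
  mul_pt : mul (pt, pt) = pt
  inv_pt : inv pt = pt
  left_id : HomotopicRel ⟨fun g => mul (pt, g), by fun_prop⟩ (ContinuousMap.id P) {pt}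
  right_id : HomotopicRel ⟨fun g => mul (g, pt), by fun_prop⟩ (ContinuousMap.id P) {pt}
  left_inv : HomotopicRel ⟨fun g => mul (inv g, g), by fun_prop⟩ (const P pt) {pt}
  right_inv : HomotopicRel ⟨fun g => mul (g, inv g), by fun_prop⟩ (const P pt) {pt}
  assoc : HomotopicRel ⟨fun p : P × P × P => mul (mul (p.1, p.2.1), p.2.2), by fun_prop⟩
      ⟨fun p : P × P × P => mul (p.1, mul (p.2.1, p.2.2)), by fun_prop⟩ {(pt, pt, pt)}

/-- `Jtn S g` : `g` homotopically belongs to `S`, i.e. there is a path in the ambient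
space from `g` to a point of `S`. -/
def Jtn {P : Type u} [TopologicalSpace P] (S : Set P) (g : P) : Prop := ∃ s ∈ S, Joined g s

/-- The class of `g` in `π₀`. -/
def pc {P : Type u} [TopologicalSpace P] (g : P) : ZerothHomotopy P :=
  Quotient.mk (pathSetoid P) g

namespace HGroup
variable {P : Type u} [TopologicalSpace P]

/-- The left coset `g·S = {g' | η(g)·g' ∈̃ S}`. -/
def lcoset (H : HGroup P) (g : P) (S : Set P) : Set P :=
  {g' | Jtn S (H.mul (H.inv g, g'))}

/-- The right coset `S·g = {g' | g'·η(g) ∈̃ S}`. -/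
def rcoset (H : HGroup P) (S : Set P) (g : P) : Set P :=
  {g' | Jtn S (H.mul (g', H.inv g))}

/-- The pointwise product of two subsets. -/
def mulSet (H : HGroup P) (A B : Set P) : Set P := {p | ∃ a ∈ A, ∃ b ∈ B, p = H.mul (a, b)}

end HGroup

/-- A subset is saturated if it is a union of path components of the ambient space. -/
def Saturated {P : Type u} [TopologicalSpace P] (A : Set P) : Prop :=
  ∀ x ∈ A, ∀ y, Joined x y → y ∈ A

/-- A sub-H-group: a pointed subspace which is itself an H-group such that the
inclusion is an H-homomorphism (via pointed homotopies). -/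
structure SubHGroup {P : Type u} [TopologicalSpace P] (H : HGroup P) where
  carrier : Set P
  struct : HGroup carrier
  pt_val : (struct.pt : P) = H.pt
  incl_mul : HomotopicRel
    ⟨fun p : carrier × carrier => (struct.mul p : P), by fun_prop⟩
    ⟨fun p : carrier × carrier => H.mul (p.1, p.2), by fun_prop⟩
    {(struct.pt, struct.pt)}
  incl_inv : HomotopicRel
    ⟨fun x : carrier => (struct.inv x : P), by fun_prop⟩
    ⟨fun x : carrier => H.inv x, by fun_prop⟩
    {struct.pt}

/-- A sub-H-group is normal if `g·n·g⁻¹` homotopically belongs to it for all `g`, `n`. -/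
def SubHGroup.Normal {P : Type u} [TopologicalSpace P] {H : HGroup P}
    (N : SubHGroup H) : Prop :=
  ∀ g : P, ∀ n ∈ N.carrier, Jtn N.carrier (H.mul (H.mul (g, n), H.inv g))

/-- The set of left cosets of `S` in `P`. -/
def Cosets {P : Type u} [TopologicalSpace P] (H : HGroup P) (S : Set P) :=
  {T : Set P // ∃ g : P, T = H.lcoset g S}

/-- The left coset of `S` represented by `g`, as an element of `Cosets H S`. -/
def cst {P : Type u} [TopologicalSpace P] (H : HGroup P) (S : Set P) (g : P) : Cosets H S :=
  ⟨H.lcoset g S, g, rfl⟩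

/-- The coset equivalence relation: `g₁ ∼ g₂` iff `g₁·η(g₂) ∈̃ S`. -/
def cosetRel {P : Type u} [TopologicalSpace P] (H : HGroup P) (S : Set P)
    (g₁ g₂ : P) : Prop :=
  Jtn S (H.mul (g₁, H.inv g₂))

/-!
The path components `π₀(P)` form a group, and saturated sub-H-groups of `P` correspond to
subgroups of `π₀(P)`: a homotopy that starts in a saturated set stays in it, so the preimage of a
subgroup inherits the H-group structure of `P`. Under this correspondence the saturation `W` of
`MN` is the preimage of `π₀M · π₀N = π₀M ⊔ π₀N`, a subgroup because `π₀N` is normal, and the coset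
relations become those of `π₀(P)`. The inclusion `M ⊆ W` induces `M/(M ∩ N) → W/N`; it is
injective because `M` is closed under `(g₁, g₂) ↦ g₁·η(g₂)`, and surjective because every point
of `W` is joined to a point of `m·N` with `m ∈ M`.
-/

open Pointwise

theorem ContinuousMap.HomotopicRel.joined {X Y : Type*} [TopologicalSpace X]
    [TopologicalSpace Y] {f g : C(X, Y)} {A : Set X} (h : HomotopicRel f g A) (x : X) :
    Joined (f x) (g x) :=
  let ⟨F⟩ := h
  ⟨F.evalAt x⟩

theorem ContinuousMap.HomotopicRel.precomp {X Y Z : Type*} [TopologicalSpace X]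
    [TopologicalSpace Y] [TopologicalSpace Z] {f g : C(Y, Z)} {A : Set Y}
    (h : HomotopicRel f g A) (k : C(X, Y)) {B : Set X} (hk : Set.MapsTo k B A) :
    HomotopicRel (f.comp k) (g.comp k) B :=
  let ⟨F⟩ := h
  ⟨{ toFun := fun p => F (p.1, k p.2)
     map_zero_left := fun x => F.apply_zero (k x)
     map_one_left := fun x => F.apply_one (k x)
     prop' := fun t x hx => F.prop t (k x) (hk hx) }⟩

section Saturated

variable {P : Type u} [TopologicalSpace P]

theorem Saturated.jtn_iff {S : Set P} (hS : Saturated S) {g : P} : Jtn S g ↔ g ∈ S :=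
  ⟨fun ⟨s, hs, hgs⟩ => hS s hs g hgs.symm, fun hg => ⟨g, hg, Joined.refl g⟩⟩

/-- Each track `t ↦ F (t, x)` of the homotopy stays in the path component of its starting
point. -/
theorem Saturated.homotopicRel_of_val {X : Type*} [TopologicalSpace X] {S : Set P}
    (hS : Saturated S) {f g : C(X, S)} {A : Set X}
    (h : ContinuousMap.HomotopicRel ((ContinuousMap.mk Subtype.val).comp f)
      ((ContinuousMap.mk Subtype.val).comp g) A) :
    ContinuousMap.HomotopicRel f g A := by
  obtain ⟨F⟩ := h
  have joined_zero (t : unitInterval) : Joined 0 t :=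
    ⟨{ toFun := fun s => ⟨s * t, unitInterval.mul_mem s.2 t.2⟩
       source' := by simp
       target' := by simp }⟩
  have mem (p : unitInterval × X) : F p ∈ S := by
    have track := (joined_zero p.1).map (by fun_prop : Continuous fun t => F (t, p.2))
    rw [F.apply_zero] at track
    exact hS _ (f p.2).2 _ track
  exact ⟨{ toFun := fun p => ⟨F p, mem p⟩
           continuous_toFun := by fun_prop
           map_zero_left := fun x => Subtype.ext (F.apply_zero x)
           map_one_left := fun x => Subtype.ext (F.apply_one x)
           prop' := fun t x hx => Subtype.ext (F.prop t x hx) }⟩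

end Saturated

namespace HGroup

variable {P : Type u} [TopologicalSpace P] (H : HGroup P)

def restrict (S : Set P) (hS : Saturated S) (hpt : H.pt ∈ S)
    (hmul : ∀ a ∈ S, ∀ b ∈ S, H.mul (a, b) ∈ S) (hinv : ∀ a ∈ S, H.inv a ∈ S) :
    HGroup S where
  pt := ⟨H.pt, hpt⟩
  mul := ⟨fun p => ⟨H.mul (p.1, p.2), hmul _ p.1.2 _ p.2.2⟩, by fun_prop⟩
  inv := ⟨fun x => ⟨H.inv x, hinv _ x.2⟩, by fun_prop⟩
  mul_pt := Subtype.ext H.mul_pt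
  inv_pt := Subtype.ext H.inv_pt
  left_id := hS.homotopicRel_of_val <|
    H.left_id.precomp ⟨Subtype.val, by fun_prop⟩ (by rintro x rfl; rfl)
  right_id := hS.homotopicRel_of_val <|
    H.right_id.precomp ⟨Subtype.val, by fun_prop⟩ (by rintro x rfl; rfl)
  left_inv := hS.homotopicRel_of_val <|
    H.left_inv.precomp ⟨Subtype.val, by fun_prop⟩ (by rintro x rfl; rfl)
  right_inv := hS.homotopicRel_of_val <|
    H.right_inv.precomp ⟨Subtype.val, by fun_prop⟩ (by rintro x rfl; rfl)
  assoc := hS.homotopicRel_of_val <|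
    H.assoc.precomp ⟨fun p : S × S × S => ((p.1 : P), (p.2.1 : P), (p.2.2 : P)), by fun_prop⟩
      (by rintro x rfl; rfl)

/-- A copy of `π₀(P)`, carrying the group structure induced by `H`. -/
def Pi0 (_ : HGroup P) : Type u := ZerothHomotopy P

def toPi0 : P → H.Pi0 := pc

instance : Mul H.Pi0 :=
  ⟨Quotient.map₂ (fun a b => H.mul (a, b))
    fun _ _ ha _ _ hb => (ha.prod hb).map H.mul.continuous⟩

instance : Inv H.Pi0 :=
  ⟨Quotient.map H.inv fun _ _ ha => ha.map H.inv.continuous⟩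

instance : One H.Pi0 :=
  ⟨H.toPi0 H.pt⟩

theorem toPi0_mul (a b : P) : H.toPi0 (H.mul (a, b)) = H.toPi0 a * H.toPi0 b := rfl

theorem toPi0_inv (a : P) : H.toPi0 (H.inv a) = (H.toPi0 a)⁻¹ := rfl

theorem toPi0_pt : H.toPi0 H.pt = 1 := rfl

theorem toPi0_surjective : Function.Surjective H.toPi0 :=
  Quotient.exists_rep

theorem toPi0_eq_toPi0_iff {a b : P} : H.toPi0 a = H.toPi0 b ↔ Joined a b :=
  Quotient.eq (r := pathSetoid P)

instance : Group H.Pi0 :=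
  Group.ofLeftAxioms
    (fun a b c => by
      obtain ⟨a, rfl⟩ := H.toPi0_surjective a
      obtain ⟨b, rfl⟩ := H.toPi0_surjective b
      obtain ⟨c, rfl⟩ := H.toPi0_surjective c
      simp only [← toPi0_mul, toPi0_eq_toPi0_iff]
      exact H.assoc.joined (a, b, c))
    (fun a => by
      obtain ⟨a, rfl⟩ := H.toPi0_surjective a
      rw [← toPi0_pt, ← toPi0_mul, toPi0_eq_toPi0_iff]
      exact H.left_id.joined a)
    (fun a => by
      obtain ⟨a, rfl⟩ := H.toPi0_surjective a
      rw [← toPi0_inv, ← toPi0_mul, ← toPi0_pt, toPi0_eq_toPi0_iff]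
      exact H.left_inv.joined a)

theorem jtn_iff_toPi0_mem_image {S : Set P} {g : P} : Jtn S g ↔ H.toPi0 g ∈ H.toPi0 '' S := by
  simp only [Jtn, Set.mem_image, H.toPi0_eq_toPi0_iff]
  exact exists_congr fun _ => and_congr_right fun _ => ⟨Joined.symm, Joined.symm⟩

theorem toPi0_mem_image_iff {S : Set P} (hS : Saturated S) {g : P} :
    H.toPi0 g ∈ H.toPi0 '' S ↔ g ∈ S := by
  rw [← H.jtn_iff_toPi0_mem_image, hS.jtn_iff]

theorem toPi0_image_mulSet (A B : Set P) :
    H.toPi0 '' H.mulSet A B = H.toPi0 '' A * H.toPi0 '' B := by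
  ext x
  simp only [mulSet, Set.mem_image, Set.mem_mul]
  constructor
  · rintro ⟨_, ⟨a, ha, b, hb, rfl⟩, rfl⟩
    exact ⟨_, ⟨a, ha, rfl⟩, _, ⟨b, hb, rfl⟩, rfl⟩
  · rintro ⟨_, ⟨a, ha, rfl⟩, _, ⟨b, hb, rfl⟩, rfl⟩
    exact ⟨_, ⟨a, ha, b, hb, rfl⟩, rfl⟩

end HGroup

namespace SubHGroup

variable {P : Type u} [TopologicalSpace P] {H : HGroup P}

theorem pt_mem (M : SubHGroup H) : H.pt ∈ M.carrier :=
  M.pt_val ▸ M.struct.pt.2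

section Saturated

variable (M : SubHGroup H)

theorem mul_mem (hM : Saturated M.carrier) {a b : P} (ha : a ∈ M.carrier)
    (hb : b ∈ M.carrier) : H.mul (a, b) ∈ M.carrier :=
  hM _ (M.struct.mul (⟨a, ha⟩, ⟨b, hb⟩)).2 _ (M.incl_mul.joined (⟨a, ha⟩, ⟨b, hb⟩))

theorem inv_mem (hM : Saturated M.carrier) {a : P} (ha : a ∈ M.carrier) :
    H.inv a ∈ M.carrier :=
  hM _ (M.struct.inv ⟨a, ha⟩).2 _ (M.incl_inv.joined ⟨a, ha⟩)

def toSubgroup (hM : Saturated M.carrier) : Subgroup H.Pi0 where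
  carrier := H.toPi0 '' M.carrier
  one_mem' := ⟨H.pt, M.pt_mem, rfl⟩
  mul_mem' := by
    rintro _ _ ⟨a, ha, rfl⟩ ⟨b, hb, rfl⟩
    exact ⟨H.mul (a, b), M.mul_mem hM ha hb, rfl⟩
  inv_mem' := by
    rintro _ ⟨a, ha, rfl⟩
    exact ⟨H.inv a, M.inv_mem hM ha, rfl⟩

theorem toPi0_mem_toSubgroup_iff (hM : Saturated M.carrier) {g : P} :
    H.toPi0 g ∈ M.toSubgroup hM ↔ g ∈ M.carrier :=
  H.toPi0_mem_image_iff hM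

theorem cosetRel_iff (hM : Saturated M.carrier) {a b : P} :
    cosetRel H M.carrier a b ↔ H.toPi0 a * (H.toPi0 b)⁻¹ ∈ M.toSubgroup hM := by
  rw [cosetRel, hM.jtn_iff, ← M.toPi0_mem_toSubgroup_iff hM, H.toPi0_mul, H.toPi0_inv]

theorem cosetRel_equivalence (hM : Saturated M.carrier) :
    Equivalence (cosetRel H M.carrier) where
  refl a := by simp [M.cosetRel_iff hM]
  symm h := by
    simpa [M.cosetRel_iff hM] using (M.toSubgroup hM).inv_mem ((M.cosetRel_iff hM).1 h)
  trans h₁ h₂ := by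
    simpa [M.cosetRel_iff hM, mul_assoc] using
      (M.toSubgroup hM).mul_mem ((M.cosetRel_iff hM).1 h₁) ((M.cosetRel_iff hM).1 h₂)

end Saturated

theorem Normal.toSubgroup_normal {N : SubHGroup H} (hN : N.Normal) (hNs : Saturated N.carrier) :
    (N.toSubgroup hNs).Normal := by
  constructor
  rintro _ ⟨n, hn, rfl⟩ g
  obtain ⟨g, rfl⟩ := H.toPi0_surjective g
  rw [← H.toPi0_inv, ← H.toPi0_mul, ← H.toPi0_mul, N.toPi0_mem_toSubgroup_iff hNs,
    ← hNs.jtn_iff]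
  exact hN g n hn

def ofSubgroup (K : Subgroup H.Pi0) : SubHGroup H where
  carrier := H.toPi0 ⁻¹' K
  struct := H.restrict _
    (fun x hx y hxy => by rwa [Set.mem_preimage, ← (H.toPi0_eq_toPi0_iff).2 hxy])
    K.one_mem (fun a ha b hb => K.mul_mem ha hb) (fun a ha => K.inv_mem ha)
  pt_val := rfl
  incl_mul := .refl _
  incl_inv := .refl _

theorem subset_ofSubgroup (M : SubHGroup H) (hM : Saturated M.carrier) {K : Subgroup H.Pi0}
    (hMK : M.toSubgroup hM ≤ K) : M.carrier ⊆ (ofSubgroup K).carrier :=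
  fun a ha => hMK ⟨a, ha, rfl⟩

theorem carrier_ofSubgroup_sup {M N : SubHGroup H} (hM : Saturated M.carrier)
    (hN : Saturated N.carrier) [(N.toSubgroup hN).Normal] :
    (ofSubgroup (M.toSubgroup hM ⊔ N.toSubgroup hN)).carrier =
      {p | Jtn (H.mulSet M.carrier N.carrier) p} := by
  ext p
  rw [Set.mem_ofPred, H.jtn_iff_toPi0_mem_image, H.toPi0_image_mulSet]
  exact Set.ext_iff.1 (Subgroup.mul_normal _ _) _

end SubHGroup

section SecondIsomorphism

variable {P : Type u} [TopologicalSpace P] (H : HGroup P)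

theorem cosetRel_mono {S T : Set P} (hST : S ⊆ T) {a b : P} (h : cosetRel H S a b) :
    cosetRel H T a b :=
  let ⟨s, hs, hj⟩ := h
  ⟨s, hST hs, hj⟩

def quotInterMap {A B : Set P} (S : Set P) (hAB : A ⊆ B) :
    Quot (fun a b : A => cosetRel H (A ∩ S) a b) → Quot (fun a b : B => cosetRel H S a b) :=
  Quot.map (Set.inclusion hAB) fun _ _ => cosetRel_mono H Set.inter_subset_right

variable {H} {M N : SubHGroup H}

theorem quotInterMap_injective (hM : Saturated M.carrier) (hN : Saturated N.carrier) {B : Set P}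
    (hMB : M.carrier ⊆ B) : Function.Injective (quotInterMap H N.carrier hMB) := by
  rintro ⟨a⟩ ⟨b⟩ hab
  replace hab : Quot.mk (fun x y : B => cosetRel H N.carrier x y) (Set.inclusion hMB a) =
      Quot.mk _ (Set.inclusion hMB b) := hab
  have hrel : cosetRel H N.carrier a b :=
    ((N.cosetRel_equivalence hN).comap (Subtype.val : B → P)).eqvGen_iff.1 (Quot.eq.1 hab)
  rw [cosetRel, hN.jtn_iff] at hrel
  exact Quot.sound ⟨_, ⟨M.mul_mem hM a.2 (M.inv_mem hM b.2), hrel⟩, Joined.refl _⟩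

theorem quotInterMap_surjective (hM : Saturated M.carrier) (hN : Saturated N.carrier)
    [(N.toSubgroup hN).Normal]
    (hMW : M.carrier ⊆ (SubHGroup.ofSubgroup (M.toSubgroup hM ⊔ N.toSubgroup hN)).carrier) :
    Function.Surjective (quotInterMap H N.carrier hMW) := by
  rintro ⟨w⟩
  have hw : H.toPi0 w ∈ (M.toSubgroup hM : Set H.Pi0) * N.toSubgroup hN :=
    Subgroup.mul_normal (M.toSubgroup hM) (N.toSubgroup hN) ▸ w.2
  obtain ⟨_, ⟨m, hm, rfl⟩, n, hn, hmn⟩ := hw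
  refine ⟨Quot.mk _ ⟨m, hm⟩, Quot.sound ?_⟩
  show cosetRel H N.carrier m w
  rw [N.cosetRel_iff hN, ← hmn]
  simpa [mul_assoc] using Subgroup.Normal.conj_mem ‹_› _ (inv_mem hn) (H.toPi0 m)

end SecondIsomorphism

/-- Second H-isomorphism theorem: for saturated sub-H-groups `M`, `N` of `P` with `N`
normal, the saturation `W` of `MN` is a sub-H-group of `P`, and `M/(M ∩ N)` is
isomorphic as a group to `W/N`. -/
theorem stmt_13 {P : Type u} [TopologicalSpace P] (H : HGroup P) (M N : SubHGroup H)
    (hM : Saturated M.carrier) (hNs : Saturated N.carrier) (hN : N.Normal)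
    (W : Set P) (hW : W = {p : P | Jtn (H.mulSet M.carrier N.carrier) p}) :
    (∃ S : SubHGroup H, S.carrier = W) ∧
    ∀ mM : Quot (fun a b : ↥M.carrier => cosetRel H (M.carrier ∩ N.carrier) a b) →
        Quot (fun a b : ↥M.carrier => cosetRel H (M.carrier ∩ N.carrier) a b) →
        Quot (fun a b : ↥M.carrier => cosetRel H (M.carrier ∩ N.carrier) a b),
      (∀ (a b : ↥M.carrier) (h : H.mul ((a : P), (b : P)) ∈ M.carrier),
        mM (Quot.mk _ a) (Quot.mk _ b) = Quot.mk _ (⟨H.mul ((a : P), (b : P)), h⟩ : ↥M.carrier)) →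
      ∀ mW : Quot (fun a b : ↥W => cosetRel H N.carrier a b) →
          Quot (fun a b : ↥W => cosetRel H N.carrier a b) →
          Quot (fun a b : ↥W => cosetRel H N.carrier a b),
        (∀ (a b : ↥W) (h : H.mul ((a : P), (b : P)) ∈ W),
          mW (Quot.mk _ a) (Quot.mk _ b) = Quot.mk _ (⟨H.mul ((a : P), (b : P)), h⟩ : ↥W)) →
        ∃ θ : Quot (fun a b : ↥M.carrier => cosetRel H (M.carrier ∩ N.carrier) a b) ≃
            Quot (fun a b : ↥W => cosetRel H N.carrier a b),
          (∀ (a : ↥M.carrier) (h : (a : P) ∈ W),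
            θ (Quot.mk _ a) = Quot.mk _ (⟨(a : P), h⟩ : ↥W)) ∧
          ∀ a b, θ (mM a b) = mW (θ a) (θ b) := by
  have := hN.toSubgroup_normal hNs
  rw [← SubHGroup.carrier_ofSubgroup_sup hM hNs] at hW
  subst hW
  refine ⟨⟨_, rfl⟩, fun mM hmM mW hmW => ?_⟩
  have hMW := M.subset_ofSubgroup hM (le_sup_left (b := N.toSubgroup hNs))
  refine ⟨.ofBijective _ ⟨quotInterMap_injective hM hNs hMW, quotInterMap_surjective hM hNs hMW⟩,
    fun _ _ => rfl, ?_⟩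
  rintro ⟨a⟩ ⟨b⟩
  rw [hmM a b (M.mul_mem hM a.2 b.2)]
  exact (hmW (Set.inclusion hMW a) (Set.inclusion hMW b) _).symm
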